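/- arXiv:1901.01597 — 2 statements merged into one kernel-verified Lean document; each statement's English description precedes it below -/
import Mathlib

section
/- Let R be a commutative local ring, let n ≥ 1, let M be a free R-module admitting a basis indexed by Fin n, let L be a free R-module of rank 1, and let λ : ⋀ⁿ_R M ≃ L ⊗_R L be an R-linear isomorphism. Then there exist a basis f₁, …, fₙ of M and a basis element l of L such that λ(f₁ ∧ ⋯ ∧ fₙ) = l ⊗ l. -/
/-!
The top exterior power `⋀ⁿ M` is generated by the wedge of any basis of `M`, so `λ` sends that
wedge to a generator of the free rank-one module `L ⊗ L`, i.e. to `u • (l ⊗ l)` for a unit `u`.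
Scaling one basis vector of `M` by `u` multiplies the left-hand side by `u`, and scaling `l` by
`u` multiplies the right-hand side by `u²`, so the two sides agree.
-/

open scoped TensorProduct

/-- The wedge product `f 0 ∧ ⋯ ∧ f (n-1)` of a family of vectors, as an element of the
`n`-th exterior power `⋀[R]^n M`. -/
noncomputable def wedgeProduct (R : Type*) [CommRing R] (M : Type*) [AddCommGroup M]
    [Module R M] (n : ℕ) (f : Fin n → M) : ⋀[R]^n M :=
  ⟨ExteriorAlgebra.ιMulti R n f, ExteriorAlgebra.ιMulti_range R n (Set.mem_range_self f)⟩

section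

variable {R : Type*} [CommRing R] {M : Type*} [AddCommGroup M] [Module R M]
  {N : Type*} [AddCommGroup N] [Module R N]

open Submodule

theorem AlternatingMap.apply_eq_basis_det_smul {ι : Type*} [Fintype ι] [DecidableEq ι]
    (e : Module.Basis ι R M) (f : M [⋀^ι]→ₗ[R] N) (v : ι → M) :
    f v = e.det v • f e := by
  suffices f = (LinearMap.toSpanSingleton R N (f e)).compAlternatingMap e.det from
    DFunLike.congr_fun this v
  refine e.ext_alternating fun i hi => ?_
  let σ : Equiv.Perm ι := Equiv.ofBijective i (Finite.injective_iff_bijective.1 hi)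
  change f (e ∘ σ) = e.det (e ∘ σ) • f e
  simp [AlternatingMap.map_perm, Module.Basis.det_self]

theorem Module.Basis.exists_unit_smul_eq_of_span_singleton_eq_top {ι : Type*} [Subsingleton ι]
    (c : Module.Basis ι R N) (i : ι) {x : N} (hx : span R {x} = ⊤) :
    ∃ u : Rˣ, (u : R) • c i = x := by
  have : Nonempty ι := ⟨i⟩
  obtain ⟨r, hr⟩ : ∃ r : R, r • c i = x := by
    rw [← mem_span_singleton, ← Set.range_eq_singleton fun j => congrArg c (Subsingleton.elim j i),
      c.span_eq]
    exact mem_top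
  obtain ⟨s, hs⟩ : ∃ s : R, s • x = c i := by
    rw [← mem_span_singleton, hx]
    exact mem_top
  have hsr : s * r = 1 := by
    have h : (s * r) • c i = (1 : R) • c i := by rw [mul_smul, hr, hs, one_smul]
    simpa using congrArg (fun y => c.repr y i) h
  exact ⟨⟨r, s, by rw [mul_comm, hsr], hsr⟩, hr⟩

variable (R M) in
theorem wedgeProduct_eq_ιMulti (n : ℕ) :
    wedgeProduct R M n = exteriorPower.ιMulti R n (M := M) :=
  rfl

theorem span_singleton_wedgeProduct_basis_eq_top {n : ℕ} (e : Module.Basis (Fin n) R M) :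
    span R {wedgeProduct R M n e} = ⊤ := by
  rw [eq_top_iff, ← exteriorPower.ιMulti_span, span_le]
  rintro _ ⟨v, rfl⟩
  rw [wedgeProduct_eq_ιMulti, AlternatingMap.apply_eq_basis_det_smul e _ v]
  exact mem_span_singleton.2 ⟨_, rfl⟩

theorem wedgeProduct_unitsSMul {n : ℕ} (e : Module.Basis (Fin n) R M) (w : Fin n → Rˣ) :
    wedgeProduct R M n (e.unitsSMul w) = (∏ i, (w i : R)) • wedgeProduct R M n e := by
  have : ⇑(e.unitsSMul w) = fun i => (w i : R) • e i := funext fun _ => e.unitsSMul_apply _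
  rw [this, wedgeProduct_eq_ιMulti, AlternatingMap.map_smul_univ]

end

theorem exists_basis_wedge_eq_tmul_sq_of_SLc_trivialization_general
    (R : Type*) [CommRing R]
    (M : Type*) [AddCommGroup M] [Module R M]
    (L : Type*) [AddCommGroup L] [Module R L]
    (n : ℕ) (hn : 1 ≤ n) (b : Module.Basis (Fin n) R M) (bL : Module.Basis (Fin 1) R L)
    (lam : (⋀[R]^n M) ≃ₗ[R] (L ⊗[R] L)) :
    ∃ (f : Module.Basis (Fin n) R M) (c : Module.Basis (Fin 1) R L),
      lam (wedgeProduct R M n f) = c 0 ⊗ₜ[R] c 0 := by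
  have hgen : Submodule.span R {lam (wedgeProduct R M n b)} = ⊤ := by
    rw [← Set.image_singleton, ← LinearEquiv.coe_toLinearMap, ← Submodule.map_span,
      span_singleton_wedgeProduct_basis_eq_top, Submodule.map_top, LinearEquiv.range]
  obtain ⟨u, hu⟩ :=
    (bL.tensorProduct bL).exists_unit_smul_eq_of_span_singleton_eq_top (0, 0) hgen
  refine ⟨b.unitsSMul (Pi.mulSingle ⟨0, hn⟩ u), bL.unitsSMul fun _ => u, ?_⟩
  rw [wedgeProduct_unitsSMul, ← Units.coe_prod, Fintype.prod_pi_mulSingle', map_smul, ← hu,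
    bL.tensorProduct_apply', Module.Basis.unitsSMul_apply, Units.smul_def,
    TensorProduct.smul_tmul_smul, smul_smul]

/-- Let `R` be a commutative local ring, `n ≥ 1`, `M` a free `R`-module
with a basis indexed by `Fin n`, `L` a free `R`-module of rank `1`, and
`λ : ⋀ⁿ_R M ≃ L ⊗_R L` an `R`-linear isomorphism. Then there exist a basis `f` of `M` and
a basis element `l` of `L` (i.e. a basis of `L` indexed by `Fin 1`) such that
`λ (f 0 ∧ ⋯ ∧ f (n-1)) = l ⊗ l`. -/
theorem exists_basis_wedge_eq_tmul_sq_of_SLc_trivialization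
    (R : Type*) [CommRing R] [IsLocalRing R]
    (M : Type*) [AddCommGroup M] [Module R M]
    (L : Type*) [AddCommGroup L] [Module R L]
    (n : ℕ) (hn : 1 ≤ n) (b : Module.Basis (Fin n) R M) (bL : Module.Basis (Fin 1) R L)
    (lam : (⋀[R]^n M) ≃ₗ[R] (L ⊗[R] L)) :
    ∃ (f : Module.Basis (Fin n) R M) (c : Module.Basis (Fin 1) R L),
      lam (wedgeProduct R M n f) = c 0 ⊗ₜ[R] c 0 :=
  exists_basis_wedge_eq_tmul_sq_of_SLc_trivialization_general R M L n hn b bL lam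
end

section
/- Let R be a commutative local ring and n ≥ 1. Every n×n matrix over R of determinant 1 is a product of transvections; that is, the special linear group SL_n(R) is generated by the elementary matrices 1 + c·E_{ij} with i ≠ j and c ∈ R. -/
open Matrix

section Aux

variable {R : Type*} [CommRing R] {ι : Type*} [DecidableEq ι] [Fintype ι]

/-- Auxiliary predicate: `A` is a product of transvections. -/
def IsTP (A : Matrix ι ι R) : Prop :=
  ∃ L : List (Matrix ι ι R),
    (∀ B ∈ L, ∃ (i j : ι) (c : R), i ≠ j ∧ B = Matrix.transvection i j c) ∧ A = L.prod

lemma isTP_one : IsTP (1 : Matrix ι ι R) := ⟨[], by simp, by simp⟩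

lemma isTP_transvection {i j : ι} (h : i ≠ j) (c : R) : IsTP (Matrix.transvection i j c) :=
  ⟨[Matrix.transvection i j c],
    fun B hB => by rw [List.mem_singleton] at hB; exact ⟨i, j, c, h, hB⟩, by simp⟩

lemma IsTP.mul {A B : Matrix ι ι R} (hA : IsTP A) (hB : IsTP B) : IsTP (A * B) := by
  obtain ⟨L, hL, rfl⟩ := hA
  obtain ⟨L', hL', rfl⟩ := hB
  refine ⟨L ++ L', ?_, ?_⟩
  · intro C hC
    rcases List.mem_append.1 hC with h | h
    exacts [hL C h, hL' C h]
  · simp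

lemma IsTP.det_eq_one {A : Matrix ι ι R} (hA : IsTP A) : A.det = 1 := by
  obtain ⟨L, hL, rfl⟩ := hA
  induction L with
  | nil => simp
  | cons C L ih =>
    obtain ⟨i, j, c, hij, hC⟩ := hL C (List.mem_cons_self)
    rw [List.prod_cons, det_mul, hC, det_transvection_of_ne _ _ hij, one_mul]
    exact ih fun B hB => hL B (List.mem_cons_of_mem _ hB)

lemma IsTP.exists_inv {A : Matrix ι ι R} (hA : IsTP A) :
    ∃ B : Matrix ι ι R, IsTP B ∧ B * A = 1 ∧ A * B = 1 := by
  obtain ⟨L, hL, rfl⟩ := hA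
  induction L with
  | nil => exact ⟨1, isTP_one, by simp, by simp⟩
  | cons C L ih =>
    obtain ⟨B, hB, h1, h2⟩ := ih fun B hB => hL B (List.mem_cons_of_mem _ hB)
    obtain ⟨i, j, c, hij, hC⟩ := hL C (List.mem_cons_self)
    refine ⟨B * Matrix.transvection i j (-c), hB.mul (isTP_transvection hij _), ?_, ?_⟩
    · rw [List.prod_cons, hC, Matrix.mul_assoc B, ← Matrix.mul_assoc (Matrix.transvection i j (-c)),
        Matrix.transvection_mul_transvection_same _ _ hij]
      simp [h1, ← Matrix.mul_assoc]
    · rw [List.prod_cons, hC, Matrix.mul_assoc, ← Matrix.mul_assoc L.prod, h2, Matrix.one_mul,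
        Matrix.transvection_mul_transvection_same _ _ hij]
      simp

lemma isTP_one_add_sum_col (j : ι) (s : Finset ι) (c : ι → R) (hs : ∀ i ∈ s, i ≠ j) :
    IsTP ((1 : Matrix ι ι R) + ∑ i ∈ s, Matrix.single i j (c i)) := by
  classical
  induction s using Finset.induction_on with
  | empty => simpa using isTP_one
  | @insert a s ha ih =>
    have haj : a ≠ j := hs a (Finset.mem_insert_self a s)
    have key : Matrix.transvection a j (c a) * (1 + ∑ i ∈ s, Matrix.single i j (c i))
        = 1 + ∑ i ∈ insert a s, Matrix.single i j (c i) := by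
      rw [Finset.sum_insert ha]
      have hz : ∑ i ∈ s, Matrix.single a j (c a) * Matrix.single i j (c i)
          = (0 : Matrix ι ι R) := by
        apply Finset.sum_eq_zero
        intro i hi
        exact Matrix.single_mul_single_of_ne _ _ _ _ (Ne.symm (hs i (Finset.mem_insert_of_mem hi))) _
      rw [Matrix.transvection, Matrix.add_mul, Matrix.one_mul, Matrix.mul_add, Matrix.mul_one,
        Finset.mul_sum, hz]
      abel
    rw [← key]
    exact (isTP_transvection haj _).mul (ih fun i hi => hs i (Finset.mem_insert_of_mem hi))

lemma isTP_one_add_sum_row (i : ι) (s : Finset ι) (d : ι → R) (hs : ∀ j ∈ s, j ≠ i) :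
    IsTP ((1 : Matrix ι ι R) + ∑ j ∈ s, Matrix.single i j (d j)) := by
  classical
  induction s using Finset.induction_on with
  | empty => simpa using isTP_one
  | @insert a s ha ih =>
    have hai : a ≠ i := hs a (Finset.mem_insert_self a s)
    have key : (1 + ∑ j ∈ s, Matrix.single i j (d j)) * Matrix.transvection i a (d a)
        = 1 + ∑ j ∈ insert a s, Matrix.single i j (d j) := by
      rw [Finset.sum_insert ha]
      have hz : ∑ j ∈ s, Matrix.single i j (d j) * Matrix.single i a (d a)
          = (0 : Matrix ι ι R) := by
        apply Finset.sum_eq_zero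
        intro jj hjj
        exact Matrix.single_mul_single_of_ne _ _ _ _ (hs jj (Finset.mem_insert_of_mem hjj)) _
      rw [Matrix.transvection, Matrix.mul_add, Matrix.mul_one, Matrix.add_mul, Matrix.one_mul,
        Finset.sum_mul, hz]
      abel
    rw [← key]
    exact (ih fun jj hjj => hs jj (Finset.mem_insert_of_mem hjj)).mul (isTP_transvection (Ne.symm hai) _)

lemma IsTP.fromBlocks_one {κ : Type*} [DecidableEq κ] [Fintype κ]
    {A : Matrix ι ι R} (hA : IsTP A) :
    IsTP (Matrix.fromBlocks A 0 0 (1 : Matrix κ κ R)) := by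
  obtain ⟨L, hL, rfl⟩ := hA
  induction L with
  | nil => simpa using (isTP_one : IsTP (1 : Matrix (ι ⊕ κ) (ι ⊕ κ) R))
  | cons C L ih =>
    rw [List.prod_cons]
    have hsplit : Matrix.fromBlocks (C * L.prod) 0 0 (1 : Matrix κ κ R)
        = Matrix.fromBlocks C 0 0 1 * Matrix.fromBlocks L.prod 0 0 1 := by
      rw [Matrix.fromBlocks_multiply]; simp
    rw [hsplit]
    refine IsTP.mul ?_ (ih fun B hB => hL B (List.mem_cons_of_mem _ hB))
    obtain ⟨i, j, c, hij, hC⟩ := hL C (List.mem_cons_self)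
    have : Matrix.fromBlocks C 0 0 (1 : Matrix κ κ R)
        = Matrix.transvection (Sum.inl i : ι ⊕ κ) (Sum.inl j) c := by
      rw [hC, Matrix.transvection, Matrix.transvection]
      ext (a | a) (b | b) <;>
        simp [Matrix.fromBlocks, Matrix.single, Matrix.one_apply]
    rw [this]
    exact isTP_transvection (fun h => hij (Sum.inl.inj h)) _

lemma IsTP.submatrix_equiv {κ : Type*} [DecidableEq κ] [Fintype κ]
    (e : κ ≃ ι) {A : Matrix ι ι R} (hA : IsTP A) : IsTP (A.submatrix e e) := by
  obtain ⟨L, hL, rfl⟩ := hA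
  induction L with
  | nil => simpa using (isTP_one : IsTP (1 : Matrix κ κ R))
  | cons C L ih =>
    rw [List.prod_cons, ← Matrix.submatrix_mul_equiv C L.prod e e e]
    refine IsTP.mul ?_ (ih fun B hB => hL B (List.mem_cons_of_mem _ hB))
    obtain ⟨i, j, c, hij, hC⟩ := hL C (List.mem_cons_self)
    have : C.submatrix e e = Matrix.transvection (e.symm i) (e.symm j) c := by
      rw [hC, Matrix.transvection, Matrix.transvection]
      ext a b
      simp [Matrix.submatrix_apply, Matrix.single, Matrix.one_apply,
        Equiv.eq_symm_apply, eq_comm]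
    rw [this]
    exact isTP_transvection (fun h => hij (by rw [← e.apply_symm_apply i, h, e.apply_symm_apply])) _

end Aux

section Local

variable {R : Type*} [CommRing R] [IsLocalRing R]

lemma exists_isUnit_of_isUnit_sum {ι : Type*} (s : Finset ι) (f : ι → R)
    (h : IsUnit (∑ i ∈ s, f i)) : ∃ i ∈ s, IsUnit (f i) := by
  classical
  induction s using Finset.induction_on with
  | empty => rw [Finset.sum_empty] at h; exact absurd h not_isUnit_zero
  | @insert a s ha ih =>
    rw [Finset.sum_insert ha] at h
    rcases IsLocalRing.isUnit_or_isUnit_of_isUnit_add h with h | h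
    · exact ⟨a, Finset.mem_insert_self a s, h⟩
    · obtain ⟨i, hi, hu⟩ := ih h
      exact ⟨i, Finset.mem_insert_of_mem hi, hu⟩

lemma isTP_of_det_eq_one :
    ∀ (m : ℕ) (A : Matrix (Fin (m + 1)) (Fin (m + 1)) R), A.det = 1 → IsTP A := by
  intro m
  induction m with
  | zero =>
    intro A hA
    have h1 : A 0 0 = 1 := by rw [Matrix.det_fin_one] at hA; exact hA
    have : A = 1 := by
      ext i j
      fin_cases i; fin_cases j
      simpa [Matrix.one_apply] using h1
    rw [this]; exact isTP_one
  | succ m ih =>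
    intro A hA
    set l : Fin (m + 2) := Fin.last (m + 1) with hldef
    have h0l : (0 : Fin (m + 2)) ≠ l := by
      simp only [hldef, Ne, Fin.ext_iff, Fin.val_zero, Fin.val_last]
      omega
    -- Step 1: some entry of the last column is a unit
    have hu : IsUnit (∑ i : Fin (m + 2),
        (-1 : R) ^ (i + l : ℕ) * A i l * (A.submatrix i.succAbove l.succAbove).det) := by
      rw [← Matrix.det_succ_column A l, hA]; exact isUnit_one
    obtain ⟨i, -, hi⟩ := exists_isUnit_of_isUnit_sum Finset.univ _ hu
    have hi : IsUnit (A i l) :=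
      isUnit_of_mul_isUnit_right (isUnit_of_mul_isUnit_left hi)
    -- Step 2: find T0 (product of transvections) with a unit at some (i0, l), i0 ≠ l
    obtain ⟨T0, hT0, i0, hi0l, hunit⟩ :
        ∃ T0 : Matrix (Fin (m + 2)) (Fin (m + 2)) R, IsTP T0 ∧
          ∃ i0, i0 ≠ l ∧ IsUnit ((T0 * A) i0 l) := by
      by_cases hil : i = l
      · subst hil
        obtain ⟨v, hv⟩ := hi.exists_right_inv
        refine ⟨Matrix.transvection 0 l ((1 - A 0 l) * v), isTP_transvection h0l _, 0, h0l, ?_⟩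
        rw [Matrix.transvection_mul_apply_same]
        have : A 0 l + (1 - A 0 l) * v * A l l = 1 := by
          rw [mul_assoc, mul_comm v, hv, mul_one]; ring
        rw [this]; exact isUnit_one
      · exact ⟨1, isTP_one, i, hil, by simpa using hi⟩
    -- Step 3: make the pivot equal to 1
    set A1 := T0 * A with hA1
    obtain ⟨w, hw⟩ := hunit.exists_right_inv
    set T1 := Matrix.transvection l i0 ((1 - A1 l l) * w) with hT1def
    have hT1 : IsTP T1 := isTP_transvection (Ne.symm hi0l) _
    set M := T1 * A1 with hMdef
    have hMll : M l l = 1 := by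
      rw [hMdef, hT1def, Matrix.transvection_mul_apply_same]
      rw [mul_assoc, mul_comm w, hw, mul_one]; ring
    -- Step 4: clear the last column by row operations
    set S1 : Matrix (Fin (m + 2)) (Fin (m + 2)) R :=
      ∑ i ∈ Finset.univ.erase l, Matrix.single i l (-(M i l)) with hS1
    set P := (1 : Matrix (Fin (m + 2)) (Fin (m + 2)) R) + S1 with hPdef
    have hP : IsTP P :=
      isTP_one_add_sum_col l (Finset.univ.erase l) (fun i => -(M i l))
        (fun i hi => Finset.ne_of_mem_erase hi)
    have key1 : ∀ k b : Fin (m + 2),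
        (S1 * M) k b = if k = l then 0 else -(M k l) * M l b := by
      intro k b
      rw [hS1, Finset.sum_mul, Matrix.sum_apply]
      by_cases hk : k = l
      · subst hk
        rw [if_pos rfl]
        apply Finset.sum_eq_zero
        intro i hi
        exact Matrix.single_mul_apply_of_ne _ _ _ _ _
          (Ne.symm (Finset.ne_of_mem_erase hi)) M
      · rw [if_neg hk]
        rw [Finset.sum_eq_single_of_mem k (Finset.mem_erase.2 ⟨hk, Finset.mem_univ k⟩)]
        · exact Matrix.single_mul_apply_same _ _ _ _ M
        · intro i hi hik
          exact Matrix.single_mul_apply_of_ne _ _ _ _ _ (Ne.symm hik) M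
    set M2 := P * M with hM2def
    have hM2 : ∀ k b : Fin (m + 2),
        M2 k b = M k b + if k = l then 0 else -(M k l) * M l b := by
      intro k b
      rw [hM2def, hPdef, Matrix.add_mul, Matrix.one_mul, Matrix.add_apply, key1]
    have hM2col : ∀ k : Fin (m + 2), M2 k l = if k = l then 1 else 0 := by
      intro k
      by_cases hk : k = l
      · subst hk; rw [hM2, if_pos rfl, if_pos rfl, hMll, add_zero]
      · rw [hM2, if_neg hk, if_neg hk, hMll, mul_one]; ring
    have hM2row : ∀ b : Fin (m + 2), M2 l b = M l b := by
      intro b; rw [hM2, if_pos rfl, add_zero]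
    -- Step 5: clear the last row by column operations
    set S2 : Matrix (Fin (m + 2)) (Fin (m + 2)) R :=
      ∑ j ∈ Finset.univ.erase l, Matrix.single l j (-(M2 l j)) with hS2
    set Q := (1 : Matrix (Fin (m + 2)) (Fin (m + 2)) R) + S2 with hQdef
    have hQ : IsTP Q :=
      isTP_one_add_sum_row l (Finset.univ.erase l) (fun j => -(M2 l j))
        (fun j hj => Finset.ne_of_mem_erase hj)
    have key2 : ∀ k b : Fin (m + 2),
        (M2 * S2) k b = if b = l then 0 else M2 k l * -(M2 l b) := by
      intro k b
      rw [hS2, Finset.mul_sum, Matrix.sum_apply]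
      by_cases hb : b = l
      · subst hb
        rw [if_pos rfl]
        apply Finset.sum_eq_zero
        intro j hj
        exact Matrix.mul_single_apply_of_ne _ _ _ _ _
          (Ne.symm (Finset.ne_of_mem_erase hj)) M2
      · rw [if_neg hb]
        rw [Finset.sum_eq_single_of_mem b (Finset.mem_erase.2 ⟨hb, Finset.mem_univ b⟩)]
        · exact Matrix.mul_single_apply_same _ _ _ _ M2
        · intro j hj hjb
          exact Matrix.mul_single_apply_of_ne _ _ _ _ _ (Ne.symm hjb) M2
    set N := M2 * Q with hNdef
    have hN : ∀ k b : Fin (m + 2),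
        N k b = M2 k b + if b = l then 0 else M2 k l * -(M2 l b) := by
      intro k b
      rw [hNdef, hQdef, Matrix.mul_add, Matrix.mul_one, Matrix.add_apply, key2]
    have hNcol : ∀ k : Fin (m + 2), N k l = if k = l then 1 else 0 := by
      intro k; rw [hN, if_pos rfl, add_zero, hM2col]
    have hNrow : ∀ b : Fin (m + 2), b ≠ l → N l b = 0 := by
      intro b hb
      rw [hN, if_neg hb, hM2col, if_pos rfl, one_mul]; ring
    -- Step 6: identify N as a block matrix and use the induction hypothesis
    have hcastne : ∀ i : Fin (m + 1), Fin.castSucc i ≠ l := fun i => (Fin.castSucc_lt_last i).ne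
    set e : (Fin (m + 1) ⊕ Fin 1) ≃ Fin (m + 2) := finSumFinEquiv with hedef
    have hel : ∀ i : Fin (m + 1), e (Sum.inl i) = Fin.castSucc i := by
      intro i; rfl
    have her : ∀ j : Fin 1, e (Sum.inr j) = l := by
      intro j
      rw [Subsingleton.elim j 0]
      apply Fin.ext
      simp [hedef, hldef]
    set B : Matrix (Fin (m + 1)) (Fin (m + 1)) R :=
      Matrix.of (fun i j => N (Fin.castSucc i) (Fin.castSucc j)) with hBdef
    have hsub : N.submatrix ⇑e ⇑e = Matrix.fromBlocks B 0 0 (1 : Matrix (Fin 1) (Fin 1) R) := by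
      ext (a | a) (b | b)
      · simp [Matrix.submatrix_apply, hel, hBdef]
      · simp only [Matrix.submatrix_apply, hel, her, Matrix.fromBlocks_apply₁₂]
        rw [hNcol, if_neg (hcastne a)]; rfl
      · simp only [Matrix.submatrix_apply, hel, her, Matrix.fromBlocks_apply₂₁]
        rw [hNrow _ (hcastne b)]; rfl
      · simp only [Matrix.submatrix_apply, her, Matrix.fromBlocks_apply₂₂]
        rw [hNcol, if_pos rfl, Subsingleton.elim a b, Matrix.one_apply_eq]
    have hNblocks : N = (Matrix.fromBlocks B 0 0 (1 : Matrix (Fin 1) (Fin 1) R)).submatrix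
        ⇑e.symm ⇑e.symm := by
      rw [← hsub, Matrix.submatrix_submatrix]
      simp [Equiv.self_comp_symm]
    -- relate N to A
    set U := P * (T1 * T0) with hUdef
    have hU : IsTP U := hP.mul (hT1.mul hT0)
    have hNUAQ : N = U * A * Q := by
      rw [hNdef, hM2def, hMdef, hA1, hUdef]
      simp only [Matrix.mul_assoc]
    have hdetN : N.det = 1 := by
      rw [hNUAQ, Matrix.det_mul, Matrix.det_mul, hU.det_eq_one, hA, hQ.det_eq_one]
      ring
    have hdetB : B.det = 1 := by
      rw [hNblocks, Matrix.det_submatrix_equiv_self, Matrix.det_fromBlocks_zero₂₁,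
        Matrix.det_one, mul_one] at hdetN
      exact hdetN
    have hBisTP : IsTP B := ih B hdetB
    have hNisTP : IsTP N := by
      rw [hNblocks]
      exact (hBisTP.fromBlocks_one).submatrix_equiv e.symm
    -- Step 7: solve for A
    obtain ⟨U', hU', hU'l, hU'r⟩ := hU.exists_inv
    obtain ⟨Q', hQ', hQ'l, hQ'r⟩ := hQ.exists_inv
    have hAeq : A = U' * N * Q' := by
      rw [hNUAQ]
      have : U' * (U * A * Q) * Q' = (U' * U) * A * (Q * Q') := by
        simp only [Matrix.mul_assoc]
      rw [this, hU'l, hQ'r, Matrix.one_mul, Matrix.mul_one]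
    rw [hAeq]
    exact (hU'.mul hNisTP).mul hQ'

end Local

/-- Over a commutative local ring `R`, every `n × n` matrix of
determinant `1` (with `n ≥ 1`) is a product of transvections, i.e. of elementary matrices
`1 + c • E i j` with `i ≠ j`. -/
theorem det_one_is_product_of_transvections_of_local
    (R : Type*) [CommRing R] [IsLocalRing R] (n : ℕ) (hn : 1 ≤ n)
    (A : Matrix (Fin n) (Fin n) R) (hA : A.det = 1) :
    ∃ L : List (Matrix (Fin n) (Fin n) R),
      (∀ B ∈ L, ∃ (i j : Fin n) (c : R), i ≠ j ∧ B = Matrix.transvection i j c) ∧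
      A = L.prod := by
  obtain ⟨m, rfl⟩ : ∃ m, n = m + 1 := ⟨n - 1, (Nat.succ_pred_eq_of_pos hn).symm⟩
  exact isTP_of_det_eq_one m A hA
end
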